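/- Let h ≠ 0 and f(s) = a₁ s + a₀ with a₁² = 1. Then the helicoidal surface X(s,t) = (s cos t, s sin t, ht + f(s)) in Minkowski 3-space has constant Gauss curvature K = 1/h², where K is computed as K = -(det(X_s,X_t,X_ss)·det(X_s,X_t,X_tt) - det(X_s,X_t,X_st)²)/(EG - F²)². -/

import Mathlib

noncomputable section

/-- Lorentzian inner product on Minkowski 3-space. -/
def mink (u v : ℝ × ℝ × ℝ) : ℝ := u.1 * v.1 + u.2.1 * v.2.1 - u.2.2 * v.2.2

/-- Determinant of the 3×3 matrix with columns `u,v,w`. -/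
def det3 (u v w : ℝ × ℝ × ℝ) : ℝ :=
  u.1 * (v.2.1 * w.2.2 - v.2.2 * w.2.1)
    - u.2.1 * (v.1 * w.2.2 - v.2.2 * w.1)
    + u.2.2 * (v.1 * w.2.1 - v.2.1 * w.1)

/-- Partial derivative with respect to the first parameter. -/
def pd1 (X : ℝ → ℝ → ℝ × ℝ × ℝ) : ℝ → ℝ → ℝ × ℝ × ℝ := fun s t => deriv (fun u => X u t) s

/-- Partial derivative with respect to the second parameter. -/
def pd2 (X : ℝ → ℝ → ℝ × ℝ × ℝ) : ℝ → ℝ → ℝ × ℝ × ℝ := fun s t => deriv (fun u => X s u) t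

def Ecoef (X : ℝ → ℝ → ℝ × ℝ × ℝ) (s t : ℝ) : ℝ := mink (pd1 X s t) (pd1 X s t)
def Fcoef (X : ℝ → ℝ → ℝ × ℝ × ℝ) (s t : ℝ) : ℝ := mink (pd1 X s t) (pd2 X s t)
def Gcoef (X : ℝ → ℝ → ℝ × ℝ × ℝ) (s t : ℝ) : ℝ := mink (pd2 X s t) (pd2 X s t)

/-- `W = EG - F²`. -/
def Wform (X : ℝ → ℝ → ℝ × ℝ × ℝ) (s t : ℝ) : ℝ :=
  Ecoef X s t * Gcoef X s t - Fcoef X s t ^ 2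

/-- Numerator `H₁ = G·det(Xs,Xt,Xss) - 2F·det(Xs,Xt,Xst) + E·det(Xs,Xt,Xtt)`. -/
def H1 (X : ℝ → ℝ → ℝ × ℝ × ℝ) (s t : ℝ) : ℝ :=
  Gcoef X s t * det3 (pd1 X s t) (pd2 X s t) (pd1 (pd1 X) s t)
    - 2 * Fcoef X s t * det3 (pd1 X s t) (pd2 X s t) (pd2 (pd1 X) s t)
    + Ecoef X s t * det3 (pd1 X s t) (pd2 X s t) (pd2 (pd2 X) s t)

/-- `K₁ = det(Xs,Xt,Xss)·det(Xs,Xt,Xtt) - det(Xs,Xt,Xst)²`. -/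
def K1 (X : ℝ → ℝ → ℝ × ℝ × ℝ) (s t : ℝ) : ℝ :=
  det3 (pd1 X s t) (pd2 X s t) (pd1 (pd1 X) s t)
      * det3 (pd1 X s t) (pd2 X s t) (pd2 (pd2 X) s t)
    - det3 (pd1 X s t) (pd2 X s t) (pd2 (pd1 X) s t) ^ 2

/-- Mean curvature of a timelike surface (`ε = 1`, `W < 0`). -/
def Hmean (X : ℝ → ℝ → ℝ × ℝ × ℝ) (s t : ℝ) : ℝ :=
  -(1 / 2) * H1 X s t / (-(Wform X s t)) ^ ((3 : ℝ) / 2)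

/-- Gauss curvature `K = -K₁/W²`. -/
def Kcurv (X : ℝ → ℝ → ℝ × ℝ × ℝ) (s t : ℝ) : ℝ :=
  -(K1 X s t) / (Wform X s t) ^ 2

/-! For any profile `f`, the Gauss curvature of `(s cos t, s sin t, h t + f s)` is
`(h² - s³ f' f'') / (s² - h² - s² f'²)²`. A linear profile with `f'² = 1` has `f'' = 0`
and turns the denominator into `(-h²)² = h⁴`. -/

def helicoid (h : ℝ) (f : ℝ → ℝ) : ℝ → ℝ → ℝ × ℝ × ℝ :=
  fun s t => (s * Real.cos t, s * Real.sin t, h * t + f s)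

section Helicoid

variable (h : ℝ) {f : ℝ → ℝ} (s t : ℝ)

theorem pd1_helicoid (hf : DifferentiableAt ℝ f s) :
    pd1 (helicoid h f) s t = (Real.cos t, Real.sin t, deriv f s) :=
  (((hasDerivAt_id s).mul_const _).prodMk (((hasDerivAt_id s).mul_const _).prodMk
    ((hasDerivAt_const s (h * t)).add hf.hasDerivAt))).deriv.trans (by simp)

theorem pd2_helicoid :
    pd2 (helicoid h f) s t = (-(s * Real.sin t), s * Real.cos t, h) :=
  (((Real.hasDerivAt_cos t).const_mul s).prodMk (((Real.hasDerivAt_sin t).const_mul s).prodMk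
    (((hasDerivAt_id t).const_mul h).add_const (f s)))).deriv.trans (by simp)

theorem pd1_pd1_helicoid (hf : Differentiable ℝ f) (hf' : DifferentiableAt ℝ (deriv f) s) :
    pd1 (pd1 (helicoid h f)) s t = (0, 0, deriv (deriv f) s) := by
  have : (fun u => pd1 (helicoid h f) u t) = fun u => (Real.cos t, Real.sin t, deriv f u) :=
    funext fun u => pd1_helicoid h u t (hf u)
  exact congrArg (deriv · s) this |>.trans
    ((hasDerivAt_const s _).prodMk ((hasDerivAt_const s _).prodMk hf'.hasDerivAt)).deriv

theorem pd2_pd1_helicoid (hf : DifferentiableAt ℝ f s) :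
    pd2 (pd1 (helicoid h f)) s t = (-Real.sin t, Real.cos t, 0) := by
  have : (fun u => pd1 (helicoid h f) s u) = fun u => (Real.cos u, Real.sin u, deriv f s) :=
    funext fun u => pd1_helicoid h s u hf
  exact congrArg (deriv · t) this |>.trans
    ((Real.hasDerivAt_cos t).prodMk ((Real.hasDerivAt_sin t).prodMk
      (hasDerivAt_const t _))).deriv

theorem pd2_pd2_helicoid :
    pd2 (pd2 (helicoid h f)) s t = (-(s * Real.cos t), -(s * Real.sin t), 0) := by
  have : (fun u => pd2 (helicoid h f) s u) = fun u => (-(s * Real.sin u), s * Real.cos u, h) :=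
    funext fun u => pd2_helicoid h s u
  exact congrArg (deriv · t) this |>.trans
    ((((Real.hasDerivAt_sin t).const_mul s).neg.prodMk (((Real.hasDerivAt_cos t).const_mul s).prodMk
      (hasDerivAt_const t _))).deriv.trans (by simp))

theorem Wform_helicoid (hf : DifferentiableAt ℝ f s) :
    Wform (helicoid h f) s t = s ^ 2 - h ^ 2 - s ^ 2 * deriv f s ^ 2 := by
  simp only [Wform, Ecoef, Fcoef, Gcoef, mink, pd1_helicoid h s t hf, pd2_helicoid]
  linear_combination (s ^ 2 * (Real.cos t ^ 2 + Real.sin t ^ 2 + 1) - h ^ 2 - s ^ 2 * deriv f s ^ 2)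
    * Real.cos_sq_add_sin_sq t

theorem K1_helicoid (hf : Differentiable ℝ f) (hf' : DifferentiableAt ℝ (deriv f) s) :
    K1 (helicoid h f) s t = s ^ 3 * deriv f s * deriv (deriv f) s - h ^ 2 := by
  simp only [K1, det3, pd1_helicoid h s t (hf s), pd2_helicoid, pd1_pd1_helicoid h s t hf hf',
    pd2_pd1_helicoid h s t (hf s), pd2_pd2_helicoid]
  linear_combination (s ^ 3 * deriv f s * deriv (deriv f) s - h ^ 2)
    * (Real.cos t ^ 2 + Real.sin t ^ 2 + 1) * Real.cos_sq_add_sin_sq t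

theorem Kcurv_helicoid (hf : Differentiable ℝ f) (hf' : DifferentiableAt ℝ (deriv f) s) :
    Kcurv (helicoid h f) s t = (h ^ 2 - s ^ 3 * deriv f s * deriv (deriv f) s) /
      (s ^ 2 - h ^ 2 - s ^ 2 * deriv f s ^ 2) ^ 2 := by
  rw [Kcurv, K1_helicoid h s t hf hf', Wform_helicoid h s t (hf s), neg_sub]

end Helicoid

/-- The helicoidal surface `X(s,t) = (s cos t, s sin t, ht + a₁ s + a₀)` with `a₁² = 1`
has constant Gauss curvature `K = 1/h²`. -/
theorem stmt_2 (h a₀ a₁ : ℝ) (hh : h ≠ 0) (ha : a₁ ^ 2 = 1) :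
    let X : ℝ → ℝ → ℝ × ℝ × ℝ :=
      fun s t => (s * Real.cos t, s * Real.sin t, h * t + (a₁ * s + a₀))
    ∀ s t : ℝ, Kcurv X s t = 1 / h ^ 2 := by
  intro X s t
  have hf : Differentiable ℝ fun s => a₁ * s + a₀ := by fun_prop
  have hf' : deriv (fun s => a₁ * s + a₀) = fun _ => a₁ := by
    funext u; simp
  have hK := Kcurv_helicoid h s t hf (by rw [hf']; fun_prop)
  rw [hf', deriv_const, ha] at hK
  rw [show X = helicoid h fun s => a₁ * s + a₀ from rfl, hK]
  field_simp
  ring
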